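/- arXiv:2601.06643 — 5 statements merged into one kernel-verified Lean document; each statement's English description precedes it below -/
import Mathlib

section
/- For all t > 0, the Laplace-type integral t·∫₀^∞ Θ₁(1/z)·e^{-tz} dz equals √t / sinh(√t), where Θ₁(t) = 1 + 2·∑_{k=1}^∞ (-1)^k · exp(-(πk)²/t). -/
/-!
Termwise, `Θ₁(1/z) = ∑_{n ∈ ℤ} (-1)ⁿ e^{-π²n²z}`, and the Laplace transform of
`e^{-π²n²z}` at `t` is `1 / (π²n² + t)`; the terms are absolutely integrable, so
`t ∫₀^∞ Θ₁(1/z) e^{-tz} dz = t ∑_{n ∈ ℤ} (-1)ⁿ / (π²n² + t)`. This is the partial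
fraction expansion of `√t / sinh √t`, which comes from evaluating at `0` the Fourier
series of `cosh (a x)` on `[-π, π]`, whose `n`-th coefficient is
`(-1)ⁿ a sinh (aπ) / (π (a² + n²))`.
-/

open Real

noncomputable def Theta1 (t : ℝ) : ℝ :=
  1 + 2 * ∑' k : ℕ, (-1 : ℝ) ^ (k + 1) * Real.exp (-(π * (k + 1)) ^ 2 / t)

open MeasureTheory Set

theorem integral_neg_to_self_exp_mul_complex {w : ℂ} (hw : w ≠ 0) (r : ℝ) :
    ∫ x in (-r)..r, Complex.exp (w * x) = 2 * Complex.sinh (w * r) / w := by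
  rw [integral_exp_mul_complex hw, Complex.sinh, Complex.ofReal_neg, mul_neg]
  ring

theorem Complex.sinh_sub_int_mul_I_mul_pi (b : ℂ) (n : ℤ) :
    Complex.sinh ((b - n * Complex.I) * π) = (-1) ^ n * Complex.sinh (b * π) := by
  have hcos : Complex.cos (n * π) = (-1) ^ n := by
    rw [← Complex.ofReal_intCast, ← Complex.ofReal_mul, ← Complex.ofReal_cos, cos_int_mul_pi]
    push_cast
    rfl
  rw [show (b - n * Complex.I) * π = b * π - n * π * Complex.I by ring, Complex.sinh_sub,
    Complex.cosh_mul_I, Complex.sinh_mul_I, hcos, Complex.sin_int_mul_pi]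
  ring

instance : Fact (0 < 2 * π) := ⟨two_pi_pos⟩

theorem fourierCoeff_liftIco_cosh {a : ℝ} (ha : a ≠ 0) (n : ℤ) :
    fourierCoeff (AddCircle.liftIco (2 * π) (-π) fun x : ℝ => Complex.cosh (a * x)) n =
      ((a * sinh (a * π) / π * ((-1) ^ n / (a ^ 2 + n ^ 2)) : ℝ) : ℂ) := by
  have hfourier : ∀ x : ℝ, fourier (-n) (x : AddCircle (π - -π)) =
      Complex.exp (-(n * Complex.I * x)) := by
    intro x
    rw [fourier_coe_apply, show π - -π = 2 * π by ring]
    congr 1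
    field_simp
    push_cast
    ring
  have hsplit : ∀ x : ℝ, Complex.exp (-(n * Complex.I * x)) * Complex.cosh (a * x) =
      (Complex.exp ((a - n * Complex.I) * x) + Complex.exp ((-a - n * Complex.I) * x)) / 2 := by
    intro x
    rw [Complex.cosh, mul_div_assoc', mul_add, ← Complex.exp_add, ← Complex.exp_add]
    ring_nf
  have h₁ : (a - n * Complex.I : ℂ) ≠ 0 := fun h => ha (by simpa using congrArg Complex.re h)
  have h₂ : (-a - n * Complex.I : ℂ) ≠ 0 := fun h => ha (by simpa using congrArg Complex.re h)
  have hden : (a : ℂ) ^ 2 + (n : ℂ) ^ 2 ≠ 0 := by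
    exact_mod_cast (by positivity : a ^ 2 + (n : ℝ) ^ 2 ≠ 0)
  have hpi : (π : ℂ) ≠ 0 := by exact_mod_cast pi_ne_zero
  rw [fourierCoeff_liftIco_eq, fourierCoeffOn_eq_integral, show -π + 2 * π = π by ring]
  simp only [hfourier, smul_eq_mul, hsplit]
  rw [intervalIntegral.integral_div, intervalIntegral.integral_add
      (Continuous.intervalIntegrable (by fun_prop) _ _)
      (Continuous.intervalIntegrable (by fun_prop) _ _),
    integral_neg_to_self_exp_mul_complex h₁, integral_neg_to_self_exp_mul_complex h₂,
    Complex.sinh_sub_int_mul_I_mul_pi, Complex.sinh_sub_int_mul_I_mul_pi, Complex.real_smul,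
    neg_mul, Complex.sinh_neg]
  push_cast
  field_simp
  linear_combination (-2 * a * Complex.sinh (π * a) * n ^ 2 : ℂ) * Complex.I_sq

theorem summable_inv_add_int_sq {c : ℝ} (hc : 0 ≤ c) :
    Summable fun n : ℤ => (c + n ^ 2)⁻¹ := by
  refine (summable_one_div_int_pow.mpr one_lt_two).of_norm_bounded_eventually ?_
  filter_upwards [Filter.eventually_cofinite_ne 0] with n hn
  have hn : (0 : ℝ) < (n : ℝ) ^ 2 := by positivity
  rw [norm_inv, Real.norm_of_nonneg (by positivity), one_div]
  exact inv_anti₀ hn (by linarith)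

theorem hasSum_neg_one_zpow_div_sq_add_int_sq {a : ℝ} (ha : 0 < a) :
    HasSum (fun n : ℤ => (-1 : ℝ) ^ n / (a ^ 2 + n ^ 2)) (π / (a * sinh (a * π))) := by
  have hperiodic : Complex.cosh (a * -π : ℝ) = Complex.cosh (a * (-π + 2 * π) : ℝ) := by
    rw [show -π + 2 * π = π by ring, mul_neg, Complex.ofReal_neg, Complex.cosh_neg]
  let F : C(AddCircle (2 * π), ℂ) :=
    ⟨AddCircle.liftIco (2 * π) (-π) fun x : ℝ => Complex.cosh (a * x),
      AddCircle.liftIco_continuous (by exact_mod_cast hperiodic) (by fun_prop)⟩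
  set K := a * sinh (a * π) / π
  have hK : K ≠ 0 := by positivity
  have hcoeff : ∀ n, fourierCoeff F n = ((K * ((-1) ^ n / (a ^ 2 + n ^ 2)) : ℝ) : ℂ) :=
    fourierCoeff_liftIco_cosh ha.ne'
  have hsummable : Summable (fourierCoeff F) := by
    refine ((summable_inv_add_int_sq (sq_nonneg a)).mul_left |K|).of_norm_bounded fun n => ?_
    rw [hcoeff, Complex.norm_real, norm_mul, Real.norm_eq_abs K, norm_div, norm_zpow, norm_neg,
      norm_one, one_zpow, Real.norm_of_nonneg (by positivity), one_div]
  have hF₀ : F 0 = 1 := by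
    have hmem : (0 : ℝ) ∈ Ico (-π) (-π + 2 * π) :=
      ⟨by linarith [pi_pos], by linarith [pi_pos]⟩
    have h : F (0 : ℝ) = Complex.cosh (a * (0 : ℝ)) :=
      AddCircle.liftIco_coe_apply (f := fun x : ℝ => Complex.cosh (a * x)) hmem
    simpa using h
  have h₀ := has_pointwise_sum_fourier_series_of_summable hsummable 0
  simp only [fourier_eval_zero, smul_eq_mul, mul_one, hF₀, hcoeff] at h₀
  have h := (Complex.hasSum_ofReal.mp h₀).mul_left K⁻¹
  simp only [inv_mul_cancel_left₀ hK, mul_one] at h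
  simpa only [K, inv_div] using h

theorem hasSum_neg_one_zpow_div_pi_mul_int_sq_add_sq {s : ℝ} (hs : 0 < s) :
    HasSum (fun n : ℤ => (-1 : ℝ) ^ n / ((π * n) ^ 2 + s ^ 2)) (1 / (s * sinh s)) := by
  have h := (hasSum_neg_one_zpow_div_sq_add_int_sq (div_pos hs pi_pos)).div_const (π ^ 2)
  have hterm : ∀ n : ℤ, (-1 : ℝ) ^ n / ((s / π) ^ 2 + n ^ 2) / π ^ 2 =
      (-1) ^ n / ((π * n) ^ 2 + s ^ 2) := fun n => by
    field_simp
    ring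
  have hvalue : π / (s / π * sinh (s / π * π)) / π ^ 2 = 1 / (s * sinh s) := by
    rw [div_mul_cancel₀ _ pi_ne_zero]
    field_simp
  rwa [funext hterm, hvalue] at h

theorem hasSum_theta1 {t : ℝ} (ht : 0 < t) :
    HasSum (fun n : ℤ => (-1 : ℝ) ^ n * exp (-(π * n) ^ 2 / t)) (Theta1 t) := by
  set f : ℤ → ℝ := fun n => (-1 : ℝ) ^ n * exp (-(π * n) ^ 2 / t)
  have hpos : ∀ k : ℕ, f (k + 1) = (-1 : ℝ) ^ (k + 1) * exp (-(π * (k + 1)) ^ 2 / t) := by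
    intro k
    simp only [f]
    norm_cast
  have hneg : ∀ k : ℕ, f (-(k + 1)) = f (k + 1) := by
    intro k
    simp only [f, zpow_neg, ← inv_zpow, inv_neg, inv_one, Int.cast_neg, mul_neg, neg_sq]
  have hsummable : Summable fun k : ℕ => f (k + 1) := by
    have hdecay : -(π ^ 2 / t) < 0 := neg_lt_zero.2 (by positivity)
    have hsq : ∀ k : ℕ, (k : ℝ) ≤ ((k : ℝ) + 1) ^ 2 := fun k => by nlinarith
    refine (summable_exp_nat_mul_of_ge hdecay hsq).of_norm_bounded fun k => ?_
    rw [hpos, norm_mul, norm_pow, norm_neg, norm_one, one_pow, one_mul,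
      Real.norm_of_nonneg (exp_nonneg _)]
    exact le_of_eq <| congrArg exp <| by ring
  have h := hsummable.hasSum.of_add_one_of_neg_add_one (hsummable.hasSum.congr_fun hneg)
  have hf₀ : f 0 = 1 := by simp [f]
  simp only [hpos, hf₀] at h
  convert h using 1
  rw [Theta1]
  ring

theorem integral_Ioi_tsum_mul_exp_neg_mul {ι : Type*} [Countable ι] {b c : ι → ℝ}
    (hc : ∀ i, 0 < c i) (hbc : Summable fun i => b i / c i) :
    ∫ z in Ioi 0, ∑' i, b i * exp (-(c i * z)) = ∑' i, b i / c i := by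
  have hexp : ∀ i, ∫ z in Ioi 0, exp (-(c i * z)) = (c i)⁻¹ := fun i => by
    simpa [neg_mul] using integral_exp_mul_Ioi (neg_lt_zero.2 (hc i)) 0
  have hint : ∀ i, Integrable (fun z => b i * exp (-(c i * z))) (volume.restrict (Ioi 0)) :=
    fun i => by
      simpa [neg_mul] using (integrableOn_exp_mul_Ioi (neg_lt_zero.2 (hc i)) 0).const_mul (b i)
  have hnorm : ∀ i, ∫ z in Ioi 0, ‖b i * exp (-(c i * z))‖ = |b i / c i| := fun i => by
    rw [abs_div, abs_of_pos (hc i), div_eq_mul_inv]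
    simp only [norm_mul, Real.norm_eq_abs, abs_exp, integral_const_mul, hexp]
  rw [← integral_tsum_of_summable_integral_norm hint (by simpa only [hnorm] using hbc.abs)]
  simp only [integral_const_mul, hexp, div_eq_mul_inv]

theorem laplace_theta1 (t : ℝ) (ht : 0 < t) :
    t * ∫ z in Set.Ioi (0 : ℝ), Theta1 (1 / z) * Real.exp (-(t * z)) =
      Real.sqrt t / Real.sinh (Real.sqrt t) := by
  have hs : 0 < √t := sqrt_pos.2 ht
  have hsum := hasSum_neg_one_zpow_div_pi_mul_int_sq_add_sq hs
  rw [sq_sqrt ht.le] at hsum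
  have hpointwise : ∀ z ∈ Ioi (0 : ℝ), Theta1 (1 / z) * exp (-(t * z)) =
      ∑' n : ℤ, (-1 : ℝ) ^ n * exp (-(((π * n) ^ 2 + t) * z)) := by
    intro z hz
    rw [← (hasSum_theta1 (one_div_pos.2 hz)).tsum_eq, ← tsum_mul_right]
    congr 1 with n
    rw [mul_assoc, ← exp_add, one_div, div_inv_eq_mul]
    ring_nf
  rw [setIntegral_congr_fun measurableSet_Ioi hpointwise,
    integral_Ioi_tsum_mul_exp_neg_mul (fun n => by positivity) hsum.summable, hsum.tsum_eq]
  have hsinh : sinh √t ≠ 0 := (sinh_pos_iff.2 hs).ne'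
  field_simp
  exact (sq_sqrt ht.le).symm
end

section
/- For complex s with Re(s) > 1, ∫₀^∞ t^{s-1}/sinh(t) dt = 2·Γ(s)·(1 - 2^{-s})·ζ(s). -/
/-!
Expanding `1 / sinh t = 2 e^{-t} / (1 - e^{-2t}) = ∑ₙ 2 e^{-(2n+1)t}` and integrating term by term
against `t^{s-1}` gives `2 Γ(s) ∑ₙ (2n+1)^{-s}`; the odd terms of the zeta series sum to
`(1 - 2^{-s}) ζ(s)` because the even ones sum to `2^{-s} ζ(s)`.
-/

open Real Complex

theorem Real.hasSum_two_mul_exp_neg_odd_mul {t : ℝ} (ht : 0 < t) :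
    HasSum (fun n : ℕ ↦ 2 * rexp (-(2 * n + 1) * t)) (1 / Real.sinh t) := by
  have hq : rexp (-(2 * t)) < 1 := Real.exp_lt_one_iff.mpr (by linarith)
  have hgeom : HasSum (fun n : ℕ ↦ 2 * rexp (-t) * rexp (-(2 * t)) ^ n)
      (2 * rexp (-t) * (1 - rexp (-(2 * t)))⁻¹) :=
    (hasSum_geometric_of_lt_one (Real.exp_nonneg _) hq).mul_left _
  have hterm (n : ℕ) : 2 * rexp (-t) * rexp (-(2 * t)) ^ n = 2 * rexp (-(2 * n + 1) * t) := by
    rw [← Real.exp_nat_mul, mul_assoc, ← Real.exp_add]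
    ring_nf
  have hsum : 2 * rexp (-t) * (1 - rexp (-(2 * t)))⁻¹ = 1 / Real.sinh t := by
    have hsinh : Real.sinh t = rexp t / 2 * (1 - rexp (-(2 * t))) := by
      rw [Real.sinh_eq, mul_sub, mul_one, div_mul_eq_mul_div, ← Real.exp_add]
      ring_nf
    rw [hsinh, Real.exp_neg]
    field_simp
  simpa only [hterm, hsum] using hgeom

theorem summable_one_div_odd_rpow {σ : ℝ} (hσ : 1 < σ) :
    Summable fun n : ℕ ↦ 1 / (2 * n + 1 : ℝ) ^ σ := by
  have := (Real.summable_one_div_nat_rpow.mpr hσ).comp_injective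
    (i := fun n : ℕ ↦ 2 * n + 1) fun a b hab ↦ by simp only at hab; omega
  exact_mod_cast this

theorem hasSum_riemannZeta {s : ℂ} (hs : 1 < s.re) :
    HasSum (fun n : ℕ ↦ 1 / (n : ℂ) ^ s) (riemannZeta s) :=
  zeta_eq_tsum_one_div_nat_cpow hs ▸ (summable_one_div_nat_cpow.mpr hs).hasSum

theorem hasSum_one_div_even_cpow {s : ℂ} (hs : 1 < s.re) :
    HasSum (fun n : ℕ ↦ 1 / ((2 * n : ℕ) : ℂ) ^ s) (2 ^ (-s) * riemannZeta s) := by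
  have hs0 : s ≠ 0 := by rintro rfl; simp at hs; linarith
  refine ((hasSum_riemannZeta hs).mul_left _).congr_fun fun n ↦ ?_
  rw [Nat.cast_mul, Nat.cast_ofNat, show ((2 : ℂ) * n) = ((2 : ℝ) : ℂ) * ((n : ℝ) : ℂ) by simp,
    mul_cpow_ofReal_nonneg zero_le_two n.cast_nonneg, cpow_neg]
  simp [div_eq_mul_inv, mul_comm]

theorem hasSum_one_div_odd_cpow {s : ℂ} (hs : 1 < s.re) :
    HasSum (fun n : ℕ ↦ 1 / ((2 * n + 1 : ℕ) : ℂ) ^ s) ((1 - 2 ^ (-s)) * riemannZeta s) := by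
  have hodd : HasSum (fun n : ℕ ↦ 1 / ((2 * n + 1 : ℕ) : ℂ) ^ s) _ :=
    ((hasSum_riemannZeta hs).summable.comp_injective
      (i := fun n : ℕ ↦ 2 * n + 1) fun a b hab ↦ by simp only at hab; omega).hasSum
  have hsplit := HasSum.even_add_odd (f := fun n : ℕ ↦ 1 / (n : ℂ) ^ s)
    (hasSum_one_div_even_cpow hs) hodd
  convert hodd using 1
  linear_combination (hasSum_riemannZeta hs).unique hsplit

theorem mellin_one_div_sinh {s : ℂ} (hs : 1 < s.re) :
    mellin (fun t : ℝ ↦ 1 / Complex.sinh t) s =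
      2 * Gamma s * (1 - 2 ^ (-s)) * riemannZeta s := by
  have hmellin := hasSum_mellin (a := fun _ : ℕ ↦ (2 : ℂ)) (p := fun n : ℕ ↦ 2 * n + 1)
    (F := fun t : ℝ ↦ 1 / Complex.sinh t) (fun n ↦ Or.inr (by positivity)) (by linarith)
    (fun t ht ↦ by
      simpa only [ofReal_mul, ofReal_ofNat, ofReal_div, ofReal_one, ofReal_sinh] using
        Complex.hasSum_ofReal.mpr (Real.hasSum_two_mul_exp_neg_odd_mul ht))
    (by simpa only [Complex.norm_ofNat, mul_one_div] using (summable_one_div_odd_rpow hs).mul_left 2)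
  have hodd := (hasSum_one_div_odd_cpow hs).mul_left (2 * Gamma s)
  rw [← mul_assoc] at hodd
  refine hmellin.unique (hodd.congr_fun fun n ↦ ?_)
  push_cast
  ring

theorem mellin_inv_sinh (s : ℂ) (hs : 1 < s.re) :
    ∫ t in Set.Ioi (0 : ℝ), (t : ℂ) ^ (s - 1) / Complex.sinh (t : ℂ) =
      2 * Complex.Gamma s * (1 - (2 : ℂ) ^ (-s)) * riemannZeta s := by
  rw [← mellin_one_div_sinh hs, mellin]
  simp only [smul_eq_mul, mul_one_div]
end

section
/- For any α ∈ (0, π/2), inf over t with |t| ≤ π/2 - α and λ ≥ 0 of |1 + λ·e^{2it}| is at least min(1, (4/π)·α). -/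
/-!
Write `θ = 2t`, so `|θ| ≤ π - 2α`. Since `‖1 + λ e^{iθ}‖² = (λ + cos θ)² + sin² θ`, the norm
is at least `1` when `cos θ ≥ 0` and `λ ≥ 0`, and at least `|sin θ|` for every real `λ`. If
`cos θ < 0` then `π/2 < |θ|`, and Jordan's inequality applied to `π - |θ| ∈ [2α, π/2]` gives
`|sin θ| = sin (π - |θ|) ≥ (2/π)(π - |θ|) ≥ 4α/π`.
-/

open Real

namespace Complex

lemma norm_one_add_ofReal_mul_exp_mul_I_sq (l θ : ℝ) :
    ‖1 + (l : ℂ) * exp (θ * I)‖ ^ 2 = (l + Real.cos θ) ^ 2 + Real.sin θ ^ 2 := by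
  rw [exp_mul_I, ← ofReal_cos, ← ofReal_sin, Complex.sq_norm, normSq_apply]
  simp only [add_re, add_im, mul_re, mul_im, one_re, one_im, ofReal_re, ofReal_im, I_re, I_im]
  linear_combination (l ^ 2 - 1) * Real.sin_sq_add_cos_sq θ

lemma abs_sin_le_norm_one_add_ofReal_mul_exp_mul_I (l θ : ℝ) :
    |Real.sin θ| ≤ ‖1 + (l : ℂ) * exp (θ * I)‖ := by
  refine abs_le_of_sq_le_sq ?_ (norm_nonneg _)
  rw [norm_one_add_ofReal_mul_exp_mul_I_sq]
  nlinarith [sq_nonneg (l + Real.cos θ)]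

lemma one_le_norm_one_add_ofReal_mul_exp_mul_I {l θ : ℝ} (hl : 0 ≤ l)
    (hcos : 0 ≤ Real.cos θ) : 1 ≤ ‖1 + (l : ℂ) * exp (θ * I)‖ := by
  refine (pow_le_pow_iff_left₀ zero_le_one (norm_nonneg _) two_ne_zero).1 ?_
  rw [norm_one_add_ofReal_mul_exp_mul_I_sq]
  nlinarith [Real.sin_sq_add_cos_sq θ, mul_nonneg hl hcos]

end Complex

lemma Real.abs_sin_abs (x : ℝ) : |sin (|x|)| = |sin x| := by
  rw [abs_sin_eq_sqrt_one_sub_cos_sq, abs_sin_eq_sqrt_one_sub_cos_sq, cos_abs]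

lemma Real.pi_div_two_lt_abs_of_cos_neg {x : ℝ} (hx : cos x < 0) : π / 2 < |x| := by
  by_contra! h
  rw [← cos_abs] at hx
  exact hx.not_ge <| cos_nonneg_of_mem_Icc ⟨by linarith [abs_nonneg x], h⟩

lemma Real.two_div_pi_mul_pi_sub_abs_le_abs_sin {x : ℝ} (h₁ : π / 2 ≤ |x|) (h₂ : |x| ≤ π) :
    2 / π * (π - |x|) ≤ |sin x| := by
  rw [← abs_sin_abs, ← sin_pi_sub]
  exact (mul_le_sin (by linarith) (by linarith)).trans (le_abs_self _)

theorem abs_one_add_lambda_exp_general (α : ℝ) (hα : 0 < α)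
    (t : ℝ) (ht : |t| ≤ π / 2 - α) (l : ℝ) (hl : 0 ≤ l) :
    min 1 ((4 / π) * α) ≤
      ‖1 + (l : ℂ) * Complex.exp (2 * (t : ℂ) * Complex.I)‖ := by
  have hθ : |2 * t| ≤ π - 2 * α := by rw [abs_mul, abs_two]; linarith
  rw [show 2 * (t : ℂ) = ((2 * t : ℝ) : ℂ) by push_cast; ring]
  rcases le_or_gt 0 (cos (2 * t)) with hcos | hcos
  · exact (min_le_left _ _).trans (Complex.one_le_norm_one_add_ofReal_mul_exp_mul_I hl hcos)
  · calc min 1 (4 / π * α) ≤ 4 / π * α := min_le_right _ _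
      _ ≤ 2 / π * (π - |2 * t|) := by
        rw [div_mul_eq_mul_div, div_mul_eq_mul_div, div_le_div_iff_of_pos_right pi_pos]
        linarith
      _ ≤ |sin (2 * t)| :=
        two_div_pi_mul_pi_sub_abs_le_abs_sin (pi_div_two_lt_abs_of_cos_neg hcos).le (by linarith)
      _ ≤ _ := Complex.abs_sin_le_norm_one_add_ofReal_mul_exp_mul_I _ _

theorem abs_one_add_lambda_exp (α : ℝ) (hα : 0 < α) (hα2 : α < π / 2)
    (t : ℝ) (ht : |t| ≤ π / 2 - α) (l : ℝ) (hl : 0 ≤ l) :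
    min 1 ((4 / π) * α) ≤
      ‖1 + (l : ℂ) * Complex.exp (2 * (t : ℂ) * Complex.I)‖ :=
  abs_one_add_lambda_exp_general α hα t ht l hl
end

section
/- Let F : ℝ → ℝ be integrable on (0, 2] with ∫₀¹ |F(t)|·t^N dt < ∞. Then lim_{τ→0+} ∫₀¹ |F(t+τ) - F(t)|·t^N dt = 0. -/
/-!
Extend `t ↦ F t * t ^ N` by zero outside `(0, 2]` to an integrable function `g` on `ℝ`. For
`τ ≥ 0` and `t > 0`,
`|F (t + τ) - F t| * t ^ N ≤ |g (t + τ) - g t| + |F (t + τ)| * ((t + τ) ^ N - t ^ N)`.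
The first term has integral tending to zero by continuity of translation in `L¹`. After the
substitution `s = t + τ` the second is dominated by `|F s| * s ^ N`, so dominated convergence
applies.
-/

open Filter MeasureTheory Topology Set

theorem tendsto_integral_norm_comp_add_right_sub {G E : Type*} [AddGroup G] [TopologicalSpace G]
    [IsTopologicalAddGroup G] [MeasurableSpace G] [BorelSpace G] {μ : Measure G}
    [μ.IsAddRightInvariant] [μ.InnerRegularCompactLTTop] [IsLocallyFiniteMeasure μ]
    [NormedAddCommGroup E] {g : G → E} (hg : Integrable g μ) :
    Tendsto (fun a => ∫ x, ‖g (x + a) - g x‖ ∂μ) (𝓝 0) (𝓝 0) := by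
  let T : G → C(G, G) := fun a => ⟨(· + a), by fun_prop⟩
  have hT : Continuous T :=
    ContinuousMap.continuous_of_continuous_uncurry _ (continuous_snd.add continuous_fst)
  have hmp : ∀ a, MeasurePreserving (T a) μ μ := fun a => measurePreserving_add_right μ a
  have hT0 : Tendsto T (𝓝 0) (𝓝 (ContinuousMap.id G)) := by
    convert hT.tendsto 0
    ext; simp [T]
  have hlim := (tendsto_const_nhds (x := hg.toL1 g)).compMeasurePreservingLp hT0
    hmp (.id μ) ENNReal.one_ne_top
  rw [show Lp.compMeasurePreserving (ContinuousMap.id G) (.id μ) (hg.toL1 g) = hg.toL1 g from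
    Lp.compMeasurePreserving_id_apply _, tendsto_iff_norm_sub_tendsto_zero] at hlim
  refine hlim.congr fun a => ?_
  have htranslate : Lp.compMeasurePreserving (T a) (hmp a) (hg.toL1 g)
      = (hg.comp_add_right a).toL1 _ :=
    Lp.toLp_compMeasurePreserving (memLp_one_iff_integrable.2 hg) (hmp a)
  rw [htranslate, ← Integrable.toL1_sub, L1.norm_of_fun_eq_integral_norm]
  rfl

theorem abs_sub_mul_le_abs_mul_sub_mul_add {a b u v : ℝ} (hv : 0 ≤ v) (hvu : v ≤ u) :
    |a - b| * v ≤ |a * u - b * v| + |a| * (u - v) := by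
  calc |a - b| * v = |(a * u - b * v) - a * (u - v)| := by
        rw [show a * u - b * v - a * (u - v) = (a - b) * v by ring, abs_mul, abs_of_nonneg hv]
    _ ≤ |a * u - b * v| + |a * (u - v)| := abs_sub _ _
    _ = |a * u - b * v| + |a| * (u - v) := by rw [abs_mul, abs_of_nonneg (sub_nonneg.2 hvu)]

section MonotoneWeight

variable {f w : ℝ → ℝ}

theorem norm_abs_mul_sub_comp_sub_le (hw_mono : Monotone w) (hw_nonneg : 0 ≤ w) {τ : ℝ}
    (hτ : 0 ≤ τ) (s : ℝ) : ‖|f s| * (w s - w (s - τ))‖ ≤ ‖f s * w s‖ := by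
  have hdiff : 0 ≤ w s - w (s - τ) := sub_nonneg.2 (hw_mono (by linarith))
  rw [Real.norm_of_nonneg (mul_nonneg (abs_nonneg _) hdiff), norm_mul, Real.norm_eq_abs,
    Real.norm_of_nonneg (hw_nonneg s)]
  exact mul_le_mul_of_nonneg_left (sub_le_self _ (hw_nonneg _)) (abs_nonneg _)

variable (hf : Measurable f) (hw_cont : Continuous w) (hw_mono : Monotone w) (hw_nonneg : 0 ≤ w)
  (hfw : Integrable (fun t => f t * w t))
include hf hw_cont hw_mono hw_nonneg hfw

theorem integrable_abs_comp_add_mul_sub {τ : ℝ} (hτ : 0 ≤ τ) :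
    Integrable (fun t => |f (t + τ)| * (w (t + τ) - w t)) := by
  have h : Integrable (fun s => |f s| * (w s - w (s - τ))) :=
    hfw.norm.mono' (by fun_prop) (ae_of_all _ (norm_abs_mul_sub_comp_sub_le hw_mono hw_nonneg hτ))
  simpa using h.comp_add_right τ

theorem tendsto_integral_abs_comp_add_mul_sub :
    Tendsto (fun τ => ∫ t, |f (t + τ)| * (w (t + τ) - w t)) (𝓝[≥] 0) (𝓝 0) := by
  have hshift (τ : ℝ) : ∫ t, |f (t + τ)| * (w (t + τ) - w t)
      = ∫ s, |f s| * (w s - w (s - τ)) := by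
    simpa using integral_add_right_eq_self (fun s => |f s| * (w s - w (s - τ))) τ
  simp_rw [hshift]
  have hdom := tendsto_integral_filter_of_dominated_convergence (fun s => ‖f s * w s‖)
    (l := 𝓝[≥] 0) (F := fun τ s => |f s| * (w s - w (s - τ))) (f := fun _ => 0)
    (.of_forall fun τ => by fun_prop)
    (eventually_nhdsWithin_of_forall fun τ hτ =>
      ae_of_all _ (norm_abs_mul_sub_comp_sub_le hw_mono hw_nonneg hτ))
    hfw.norm
    (ae_of_all _ fun s => by
      have hcont : Continuous fun τ => |f s| * (w s - w (s - τ)) := by fun_prop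
      simpa using (hcont.tendsto 0).mono_left nhdsWithin_le_nhds)
  simpa using hdom

theorem tendsto_setIntegral_abs_comp_add_sub_mul (s : Set ℝ) :
    Tendsto (fun τ => ∫ t in s, |f (t + τ) - f t| * w t) (𝓝[≥] 0) (𝓝 0) := by
  have hlim := ((tendsto_integral_norm_comp_add_right_sub hfw).mono_left nhdsWithin_le_nhds).add
    (tendsto_integral_abs_comp_add_mul_sub hf hw_cont hw_mono hw_nonneg hfw)
  rw [zero_add] at hlim
  refine squeeze_zero' (.of_forall fun τ => setIntegral_nonneg_of_ae
    (ae_of_all _ fun t => mul_nonneg (abs_nonneg _) (hw_nonneg t))) ?_ hlim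
  filter_upwards [self_mem_nhdsWithin] with τ (hτ : 0 ≤ τ)
  have hdiff := ((hfw.comp_add_right τ).sub hfw).norm
  have hweight := integrable_abs_comp_add_mul_sub hf hw_cont hw_mono hw_nonneg hfw hτ
  have hw_le (t : ℝ) : w t ≤ w (t + τ) := hw_mono (by linarith)
  calc ∫ t in s, |f (t + τ) - f t| * w t
      ≤ ∫ t in s, (‖f (t + τ) * w (t + τ) - f t * w t‖
          + |f (t + τ)| * (w (t + τ) - w t)) :=
        integral_mono_of_nonneg (ae_of_all _ fun t => mul_nonneg (abs_nonneg _) (hw_nonneg t))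
          (hdiff.add hweight).integrableOn (ae_of_all _ fun t =>
            abs_sub_mul_le_abs_mul_sub_mul_add (hw_nonneg t) (hw_le t))
    _ ≤ ∫ t, (‖f (t + τ) * w (t + τ) - f t * w t‖ + |f (t + τ)| * (w (t + τ) - w t)) :=
        setIntegral_le_integral (hdiff.add hweight) (ae_of_all _ fun t =>
          add_nonneg (norm_nonneg _) (mul_nonneg (abs_nonneg _) (sub_nonneg.2 (hw_le t))))
    _ = _ := integral_add hdiff hweight

end MonotoneWeight

theorem integrableOn_mul_pow_Ioc {F : ℝ → ℝ} {N : ℕ} {a b : ℝ} (hF : Measurable F)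
    (h0 : IntegrableOn (fun t => |F t| * t ^ N) (Ioc 0 a)) (h1 : IntegrableOn F (Icc a b)) :
    IntegrableOn (fun t => F t * t ^ N) (Ioc 0 b) := by
  have hnear : IntegrableOn (fun t => F t * t ^ N) (Ioc 0 a) :=
    h0.mono' (by fun_prop) <| (ae_restrict_iff' measurableSet_Ioc).2 <| ae_of_all _ fun t ht => by
      rw [norm_mul, Real.norm_eq_abs, norm_pow, Real.norm_of_nonneg ht.1.le]
  have hfar : IntegrableOn (fun t => F t * t ^ N) (Icc a b) :=
    h1.mul_continuousOn (by fun_prop) isCompact_Icc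
  refine (hnear.union hfar).mono_set fun t ht => ?_
  rcases le_or_gt t a with hta | hat
  exacts [Or.inl ⟨ht.1, hta⟩, Or.inr ⟨hat.le, ht.2⟩]

theorem weighted_modulus_continuity (N : ℕ) (F : ℝ → ℝ)
    (hmeas : Measurable F)
    (hint : ∀ δ : ℝ, 0 < δ → IntegrableOn F (Set.Icc δ 2))
    (hw : IntegrableOn (fun t => |F t| * t ^ N) (Set.Ioc (0 : ℝ) 1)) :
    Tendsto (fun τ => ∫ t in Set.Ioc (0 : ℝ) 1, |F (t + τ) - F t| * t ^ N)
      (nhdsWithin 0 (Set.Ioi 0)) (nhds 0) := by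
  set f := (Ioc (0 : ℝ) 2).indicator F
  set w := fun t : ℝ => max t 0 ^ N
  have hw_mono : Monotone w := fun a b hab =>
    pow_le_pow_left₀ (le_max_right _ _) (max_le_max_right 0 hab) N
  have hfw : Integrable (fun t => f t * w t) := by
    refine ((integrable_indicator_iff measurableSet_Ioc).2
      (integrableOn_mul_pow_Ioc hmeas hw (hint 1 one_pos))).congr (ae_of_all _ fun t => ?_)
    by_cases ht : t ∈ Ioc (0 : ℝ) 2
    · simp [f, w, ht, max_eq_left ht.1.le]
    · simp [f, w, ht]
  have hlim := tendsto_setIntegral_abs_comp_add_sub_mul (hmeas.indicator measurableSet_Ioc)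
    (by fun_prop) hw_mono (fun t => pow_nonneg (le_max_right t 0) N) hfw (Ioc 0 1)
  refine (hlim.mono_left (nhdsWithin_mono _ Ioi_subset_Ici_self)).congr' ?_
  filter_upwards [Ioo_mem_nhdsGT one_pos] with τ hτ
  refine setIntegral_congr_fun measurableSet_Ioc fun t ht => ?_
  have hshift : t + τ ∈ Ioc (0 : ℝ) 2 :=
    ⟨by linarith [ht.1, hτ.1], by linarith [ht.2, hτ.2]⟩
  have ht2 : t ∈ Ioc (0 : ℝ) 2 := ⟨ht.1, by linarith [ht.2]⟩
  simp [w, indicator_of_mem hshift, indicator_of_mem ht2, max_eq_left ht.1.le]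
end

section
/- The theta-like function Θ₁(t) = 1 + 2·∑_{k=1}^∞ (-1)^k·exp(-(πk)²/t) satisfies the identity Θ₁(t) = 2·√(t/π)·e^{-t/4}·(1 + ∑_{k=1}^∞ e^{-k(k+1)t}) for all t > 0; in particular Θ₁(t) = 2·√(t/π)·e^{-t/4}·(1 + O(e^{-2t})) as t → ∞. -/
/-!
Θ₁(t) is the alternating Gaussian theta series ∑_{n ∈ ℤ} (-1)ⁿ exp(-(πn)²/t). Poisson
summation (Jacobi's transformation for θ₄) turns it into √(t/π) ∑_{n ∈ ℤ} exp(-t(n + 1/2)²).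
The reflection n ↦ -n-1 pairs the terms of the dual series, and
exp(-t(n + 1/2)²) = exp(-t/4) exp(-n(n+1)t), which gives the identity. The error term is
dominated termwise by the geometric series ∑_{k ≥ 1} exp(-2t)ᵏ.
-/

open Real Filter Asymptotics

theorem tsum_int_eq_two_nsmul_tsum_nat {M : Type*} [AddCommMonoid M] [TopologicalSpace M]
    [ContinuousAdd M] [T2Space M] {f : ℤ → M} (hf : ∀ n : ℕ, f (-(n + 1)) = f n)
    (hs : Summable fun n : ℕ => f n) : ∑' n : ℤ, f n = 2 • ∑' n : ℕ, f n := by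
  rw [tsum_of_nat_of_neg_add_one hs (by simpa only [hf] using hs), two_nsmul]
  simp only [hf]

theorem summable_int_exp_neg_mul_sq {c : ℝ} (hc : 0 < c) :
    Summable fun n : ℤ => exp (-c * n ^ 2) := by
  have hnat : Summable fun n : ℕ => exp (-c * n ^ 2) :=
    summable_exp_nat_mul_of_ge (neg_neg_of_pos hc) fun n => by
      exact_mod_cast Nat.le_self_pow two_ne_zero n
  exact .of_nat_of_neg (by simpa using hnat) (by simpa using hnat)

theorem exp_neg_mul_add_half_sq (t x : ℝ) :
    exp (-t * (x + 1 / 2) ^ 2) = exp (-t / 4) * exp (-(x * (x + 1)) * t) := by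
  rw [← exp_add]
  ring_nf

theorem theta1_eq_tsum_int {t : ℝ} (ht : 0 < t) :
    Theta1 t = ∑' n : ℤ, (-1 : ℝ) ^ n * exp (-(π * n) ^ 2 / t) := by
  have heven : Function.Even fun n : ℤ => (-1 : ℝ) ^ n * exp (-(π * n) ^ 2 / t) := by
    intro n
    simp [← inv_zpow]
  have hs : Summable fun n : ℤ => (-1 : ℝ) ^ n * exp (-(π * n) ^ 2 / t) := by
    refine (summable_int_exp_neg_mul_sq (by positivity : 0 < π ^ 2 / t)).of_norm_bounded
      fun n => le_of_eq ?_
    rw [norm_mul, norm_zpow, norm_neg, norm_one, one_zpow, one_mul, norm_of_nonneg (exp_nonneg _)]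
    ring_nf
  rw [tsum_int_eq_zero_add_two_mul_tsum_pnat heven hs,
    tsum_pnat_eq_tsum_succ
      (f := fun n : ℕ => (-1 : ℝ) ^ (n : ℤ) * exp (-(π * (n : ℤ)) ^ 2 / t)), Theta1]
  simp [zpow_add₀, pow_succ]

open Complex in
theorem tsum_int_neg_one_zpow_mul_exp_eq {t : ℝ} (ht : 0 < t) :
    ∑' n : ℤ, (-1 : ℝ) ^ n * Real.exp (-(π * n) ^ 2 / t) =
      √(t / π) * ∑' n : ℤ, Real.exp (-t * (n + 1 / 2) ^ 2) := by
  have ha : 0 < π / t := by positivity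
  -- `b = -I/2` turns the linear term into `-πin`, i.e. the sign `(-1)ⁿ`, and shifts the dual
  -- lattice by `1/2`.
  have key := tsum_exp_neg_quadratic (a := (π / t : ℝ)) (by simpa using ha) (-I / 2)
  have hlhs (n : ℤ) : cexp (-π * (π / t : ℝ) * n ^ 2 + 2 * π * (-I / 2) * n) =
      ((-1 : ℝ) ^ n * Real.exp (-(π * n) ^ 2 / t) : ℝ) := by
    have harg : -π * (π / t : ℝ) * n ^ 2 + 2 * π * (-I / 2) * n =
        (-(π * n) ^ 2 / t : ℝ) + n * -(π * I) := by
      push_cast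
      field_simp
    rw [harg, Complex.exp_add, exp_int_mul, exp_neg_pi_mul_I]
    push_cast
    ring
  have hrhs (n : ℤ) : cexp (-π / (π / t : ℝ) * (n + I * (-I / 2)) ^ 2) =
      (Real.exp (-t * (n + 1 / 2) ^ 2) : ℝ) := by
    rw [show I * (-I / 2) = 1 / 2 by ring_nf; rw [I_sq]; ring, ofReal_exp]
    push_cast
    field_simp
  have hfactor : 1 / ((π / t : ℝ) : ℂ) ^ (1 / 2 : ℂ) = (√(t / π) : ℝ) := by
    rw [show (1 / 2 : ℂ) = ((1 / 2 : ℝ) : ℂ) by norm_num, ← ofReal_cpow ha.le,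
      ← sqrt_eq_rpow, one_div, ← ofReal_inv, ← sqrt_inv, inv_div]
  simp only [hlhs, hrhs, hfactor, ← ofReal_tsum, ← ofReal_mul] at key
  exact_mod_cast key

theorem tsum_int_exp_neg_mul_add_half_sq {t : ℝ} (ht : 0 < t) :
    ∑' n : ℤ, exp (-t * (n + 1 / 2) ^ 2) =
      2 * exp (-t / 4) * (1 + ∑' k : ℕ, exp (-((k + 1) * (k + 2)) * t)) := by
  have hs : Summable fun n : ℕ => exp (-t * (n + 1 / 2) ^ 2) :=
    summable_exp_nat_mul_of_ge (neg_neg_of_pos ht) fun n => by nlinarith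
  have hs' : Summable fun n : ℕ => exp (-(n * (n + 1)) * t) := by
    simpa only [exp_neg_mul_add_half_sq, summable_mul_left_iff (exp_pos _).ne'] using hs
  rw [tsum_int_eq_two_nsmul_tsum_nat (f := fun n : ℤ => exp (-t * (n + 1 / 2) ^ 2))
    (fun n => by push_cast; ring_nf) (by simpa using hs)]
  simp only [Int.cast_natCast, exp_neg_mul_add_half_sq, tsum_mul_left, hs'.tsum_eq_zero_add]
  push_cast
  simp only [nsmul_eq_mul, zero_mul, zero_add, neg_zero, exp_zero, add_assoc, one_add_one_eq_two]
  ring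

theorem tsum_exp_neg_succ_mul_succ_succ_le {t : ℝ} (ht : 0 < t) :
    ∑' k : ℕ, exp (-((k + 1) * (k + 2)) * t) ≤ exp (-2 * t) / (1 - exp (-2 * t)) := by
  set r := exp (-2 * t)
  have hr1 : r < 1 := exp_lt_one_iff.mpr (by linarith)
  have hterm (k : ℕ) : exp (-((k + 1) * (k + 2)) * t) ≤ r * r ^ k := by
    rw [← pow_succ', ← exp_nat_mul, exp_le_exp]
    push_cast
    nlinarith [mul_nonneg (mul_nonneg k.cast_nonneg k.cast_add_one_pos.le) ht.le]
  have hgeom : Summable fun k : ℕ => r * r ^ k :=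
    (summable_geometric_of_lt_one (exp_nonneg _) hr1).mul_left r
  calc ∑' k : ℕ, exp (-((k + 1) * (k + 2)) * t)
      ≤ ∑' k : ℕ, r * r ^ k :=
        (hgeom.of_nonneg_of_le (fun _ => exp_nonneg _) hterm).tsum_le_tsum hterm hgeom
    _ = r / (1 - r) := by
        rw [tsum_mul_left, tsum_geometric_of_lt_one (exp_nonneg _) hr1, div_eq_mul_inv]

theorem isBigO_tsum_exp_neg_succ_mul_succ_succ :
    (fun t : ℝ => ∑' k : ℕ, exp (-((k + 1) * (k + 2)) * t)) =O[atTop]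
      fun t : ℝ => exp (-2 * t) := by
  have hsmall : ∀ᶠ t in atTop, exp (-2 * t) ≤ 1 / 2 :=
    (tendsto_exp_atBot.comp (tendsto_id.const_mul_atTop_of_neg (by norm_num))).eventually
      (ge_mem_nhds (by norm_num))
  refine IsBigO.of_bound 2 ?_
  filter_upwards [hsmall, eventually_gt_atTop 0] with t hr ht
  rw [norm_of_nonneg (tsum_nonneg fun _ => exp_nonneg _), norm_of_nonneg (exp_nonneg _)]
  refine (tsum_exp_neg_succ_mul_succ_succ_le ht).trans ?_
  rw [div_le_iff₀ (by linarith)]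
  nlinarith [exp_nonneg (-2 * t)]

theorem theta1_eq {t : ℝ} (ht : 0 < t) :
    Theta1 t = 2 * √(t / π) * exp (-t / 4) *
      (1 + ∑' k : ℕ, exp (-((k + 1) * (k + 2)) * t)) := by
  rw [theta1_eq_tsum_int ht, tsum_int_neg_one_zpow_mul_exp_eq ht,
    tsum_int_exp_neg_mul_add_half_sq ht]
  ring

theorem theta1_transformation :
    (∀ t : ℝ, 0 < t →
        Theta1 t = 2 * Real.sqrt (t / π) * Real.exp (-t / 4) *
          (1 + ∑' k : ℕ, Real.exp (-((k + 1) * (k + 2)) * t))) ∧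
      (fun t : ℝ => Theta1 t / (2 * Real.sqrt (t / π) * Real.exp (-t / 4)) - 1) =O[atTop]
        fun t : ℝ => Real.exp (-2 * t) := by
  refine ⟨fun t ht => theta1_eq ht, isBigO_tsum_exp_neg_succ_mul_succ_succ.congr' ?_ .rfl⟩
  filter_upwards [eventually_gt_atTop 0] with t ht
  have hD : 2 * √(t / π) * exp (-t / 4) ≠ 0 := by positivity
  rw [theta1_eq ht, mul_div_cancel_left₀ _ hD, add_sub_cancel_left]
end
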